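/- arXiv:1811.07610 — 2 statements merged into one kernel-verified Lean document; each statement's English description precedes it below -/
import Mathlib

section
/- Let n ≥ 3 and let w_0, …, w_l be a symmetric filter of length l (0 < l ≤ ⌊(n−1)/2⌋). Let W^AR ∈ ℝ^{n×n} be the Anti-Reflective matrix built from w, let Q^AR ∈ ℝ^{n×n} be the Anti-Reflective Transform matrix, and let D ∈ ℝ^{n×n} be the diagonal matrix with diagonal (1, λ̂_1, …, λ̂_{n−2}, 1), where λ̂_i = w_0 + 2∑_{j=1}^{l} w_j cos(jiπ/(n−1)). Then W^AR Q^AR = Q^AR D; moreover Q^AR is invertible, so W^AR = Q^AR D (Q^AR)^{−1}. -/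
/-- The Anti-Reflective matrix `W^AR ∈ ℝ^{n×n}` (0-based indices; `i.val` plays the
role of the 1-based index `i - 1`) built from a filter `w` of length `l`,
where `z j = 2 ∑_{k=j}^{l} w k`. -/
def antiReflectiveMatrix (n l : ℕ) (w : ℕ → ℝ) : Matrix (Fin n) (Fin n) ℝ :=
  Matrix.of fun i j : Fin n =>
    if i.val = 0 then (if j.val = 0 then 2 * ∑ k ∈ Finset.Icc 1 l, w k + w 0 else 0)
    else if i.val = n - 1 then (if j.val = n - 1 then 2 * ∑ k ∈ Finset.Icc 1 l, w k + w 0 else 0)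
    else if j.val = 0 then 2 * ∑ k ∈ Finset.Icc (i.val + 1) l, w k + w i.val
    else if j.val = n - 1 then 2 * ∑ k ∈ Finset.Icc (n - i.val) l, w k + w (n - 1 - i.val)
    else w ((i.val : ℤ) - (j.val : ℤ)).natAbs
        - (w (i.val + j.val) + w (2 * n - 2 - i.val - j.val))

/-- The Anti-Reflective Transform (ART) matrix `Q^AR ∈ ℝ^{n×n}` (0-based indices):
first column `((n-i)/η)_{i=1}^n`, last column `((i-1)/η)_{i=1}^n` with
`η = √(∑_{j=0}^{n-1} j²)`, zeros elsewhere in the first and last rows, and the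
DST-I entries `√(2/(n-1))·sin((i-1)(j-1)π/(n-1))` in the interior block. -/
noncomputable def antiReflectiveTransform (n : ℕ) : Matrix (Fin n) (Fin n) ℝ :=
  Matrix.of fun i j : Fin n =>
    if j.val = 0 then
      ((n : ℝ) - 1 - (i.val : ℝ)) / Real.sqrt (∑ k ∈ Finset.range n, (k : ℝ) ^ 2)
    else if j.val = n - 1 then
      (i.val : ℝ) / Real.sqrt (∑ k ∈ Finset.range n, (k : ℝ) ^ 2)
    else if i.val = 0 ∨ i.val = n - 1 then 0
    else Real.sqrt (2 / ((n : ℝ) - 1)) *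
      Real.sin ((i.val : ℝ) * (j.val : ℝ) * Real.pi / ((n : ℝ) - 1))

/-!
Write `N = n - 1` and extend a vector on `{0, …, N}` to a function `f : ℤ → ℝ` through the
two anti-reflections `f (-t) = 2 f 0 - f t` and `f (2N - t) = 2 f N - f t`. For such an `f`, an
interior row of `W^AR` applied to `f` is the plain symmetric convolution
`w₀ f i + ∑ₘ wₘ (f (i - m) + f (i + m))`: folding the part of the window that sticks out of
`[0, N]` back in produces exactly the entries of `W^AR`. Affine functions (the first and last
columns of `Q^AR`) are anti-reflective and fixed by the convolution, because the filter sums to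
one; the functions `t ↦ sin (t j π / N)` are anti-reflective and multiplied by `λ̂ⱼ`. The first
and last rows of `W^AR` are unit rows, which gives `W^AR Q^AR = Q^AR D`.

If `Q^AR v = 0`, the first and last rows force `v 0 = v N = 0`; what remains is the DST-I of
`v`, which is injective on the interior coordinates since it squares to `N / 2` there.
-/

open Finset Matrix Real

theorem sum_range_cos_int_mul_pi_div {N : ℕ} (hN : N ≠ 0) {m : ℤ}
    (hm : ¬ (2 * N : ℤ) ∣ m) :
    ∑ k ∈ range N, cos (k * m * π / N) = sin (m * π / 2) ^ 2 := by
  have hx : sin (m * π / N / 2) ≠ 0 := by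
    rw [Ne, sin_eq_zero_iff]
    rintro ⟨q, hq⟩
    refine hm ⟨q, ?_⟩
    have : (m : ℝ) = 2 * N * q := by
      field_simp at hq
      nlinarith [pi_pos]
    exact_mod_cast this
  have hsc : sin (m * π / 2) * cos (m * π / 2) = 0 := by
    have := sin_int_mul_pi m
    rw [show (m : ℝ) * π = 2 * (m * π / 2) by ring, sin_two_mul] at this
    linarith
  have key := sin_mul_sum_cos N (m * π / N) 0
  simp only [add_zero] at key
  apply mul_left_cancel₀ hx
  simp_rw [show ∀ k : ℕ, (k : ℝ) * m * π / N = m * π / N * k from fun k => by ring]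
  rw [key, show (N : ℝ) * (m * π / N) / 2 = m * π / 2 by field_simp,
    show ((N : ℝ) - 1) * (m * π / N) / 2 = m * π / 2 - m * π / N / 2 by field_simp, cos_sub]
  linear_combination cos (m * π / N / 2) * hsc

theorem sum_range_sin_mul_sin {N a b : ℕ} (ha : 0 < a) (haN : a < N) (hbN : b ≤ N) :
    ∑ k ∈ range N, sin (k * a * π / N) * sin (k * b * π / N)
      = if a = b then (N / 2 : ℝ) else 0 := by
  have hN : N ≠ 0 := by omega
  have hprod : ∀ k : ℕ, sin (k * a * π / N) * sin (k * b * π / N)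
      = (cos (k * ((a - b : ℤ) : ℝ) * π / N) - cos (k * ((a + b : ℤ) : ℝ) * π / N))
        / 2 := by
    intro k
    rw [eq_div_iff two_ne_zero, mul_comm, ← mul_assoc, two_mul_sin_mul_sin]
    push_cast
    ring_nf
  simp_rw [hprod, ← sum_div, sum_sub_distrib]
  have hsum := sum_range_cos_int_mul_pi_div hN (m := a + b) (by
    rintro ⟨q, hq⟩
    rcases lt_trichotomy q 1 with h | h | h <;> nlinarith)
  split_ifs with hab
  · subst hab
    rw [hsum, sub_self, Int.cast_zero]
    simp only [mul_zero, zero_mul, zero_div, cos_zero, sum_const, card_range, nsmul_eq_mul, mul_one]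
    rw [show ((a + a : ℤ) : ℝ) * π / 2 = (a : ℕ) * π by push_cast; ring, sin_nat_mul_pi]
    ring
  · rw [hsum, sum_range_cos_int_mul_pi_div hN (m := a - b) (by
      rintro ⟨q, hq⟩
      obtain rfl : q = 0 := by rcases lt_trichotomy q 0 with h | h | h <;> nlinarith
      omega)]
    rw [show ((a - b : ℤ) : ℝ) * π / 2 = ((a + b : ℤ) : ℝ) * π / 2 - (b : ℕ) * π by
        push_cast; ring,
      sin_sub_nat_mul_pi, mul_pow, ← pow_mul, pow_mul', neg_one_sq, one_pow, one_mul]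
    ring

/-- The DST-I matrix, bordered by zero rows and columns at `0` and `N` so that it acts on the
index set of `Q^AR`. -/
noncomputable def sineTransform (N : ℕ) : Matrix (Fin (N + 1)) (Fin (N + 1)) ℝ :=
  of fun i k => sin ((i : ℕ) * (k : ℕ) * π / N)

theorem sineTransform_mul_self_apply {N : ℕ} {j : Fin (N + 1)} (hj0 : (j : ℕ) ≠ 0)
    (hjN : (j : ℕ) ≠ N) (k : Fin (N + 1)) :
    (sineTransform N * sineTransform N) j k = if j = k then (N / 2 : ℝ) else 0 := by
  have hN : (N : ℝ) ≠ 0 := by exact_mod_cast (show N ≠ 0 by omega)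
  have hlast : sin ((j : ℕ) * (N : ℕ) * π / N) = 0 := by
    rw [show ((j : ℕ) : ℝ) * (N : ℕ) * π / N = (j : ℕ) * π by field_simp]
    exact sin_nat_mul_pi _
  simp only [mul_apply, sineTransform, of_apply]
  rw [Fin.sum_univ_eq_sum_range
      (fun i => sin ((j : ℕ) * i * π / N) * sin (i * (k : ℕ) * π / N)),
    sum_range_succ, hlast, zero_mul, add_zero]
  simp_rw [mul_comm ((j : ℕ) : ℝ)]
  simp only [sum_range_sin_mul_sin (N := N) (b := k) (Nat.pos_of_ne_zero hj0) (by omega) (by omega),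
    Fin.val_inj]

theorem sineTransform_mulVec_eq_zero {N : ℕ} {v : Fin (N + 1) → ℝ}
    (hv : sineTransform N *ᵥ v = 0) {j : Fin (N + 1)} (hj0 : (j : ℕ) ≠ 0)
    (hjN : (j : ℕ) ≠ N) : v j = 0 := by
  have hN : (N : ℝ) / 2 ≠ 0 := by
    have : (N : ℝ) ≠ 0 := by exact_mod_cast (show N ≠ 0 by omega)
    positivity
  have h := congrFun (congrArg (sineTransform N *ᵥ ·) hv) j
  simp only [mulVec_mulVec, mulVec_zero, Pi.zero_apply] at h
  rw [mulVec, dotProduct, Fintype.sum_eq_single j fun k hk => by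
    rw [sineTransform_mul_self_apply hj0 hjN, if_neg (Ne.symm hk), zero_mul],
    sineTransform_mul_self_apply hj0 hjN, if_pos rfl] at h
  exact (mul_eq_zero.mp h).resolve_left hN

section Folding

variable {β : Type*} [AddCommMonoid β]

theorem sum_Icc_neg_fold (g : ℤ → β) (L : ℕ) :
    ∑ m ∈ Icc (-(L : ℤ)) L, g m = g 0 + ∑ m ∈ Icc 1 L, (g m + g (-m)) := by
  induction L with
  | zero => simp
  | succ L ih =>
    have hsplit : Icc (-((L + 1 : ℕ) : ℤ)) (L + 1 : ℕ)
        = insert (-((L + 1 : ℕ) : ℤ)) (insert ((L + 1 : ℕ) : ℤ) (Icc (-(L : ℤ)) L)) := by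
      ext x; simp only [mem_Icc, mem_insert]; omega
    rw [hsplit, sum_insert (by simp only [mem_insert, mem_Icc]; omega), sum_insert (by simp), ih,
      sum_Icc_succ_top (by omega)]
    abel

theorem sum_Icc_antiReflect_fold (g : ℤ → β) (M : ℕ) :
    ∑ k ∈ Icc (-(M : ℤ)) (2 * M + 1), g k
      = g 0 + g (M + 1) + ∑ k ∈ Icc 1 M, (g k + g (-k) + g (2 * (M + 1) - k)) := by
  have hsplit : Icc (-(M : ℤ)) (2 * M + 1)
      = Icc (-(M : ℤ)) M ∪ insert ((M : ℤ) + 1) (Icc ((M : ℤ) + 2) (2 * M + 1)) := by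
    ext x; simp only [mem_Icc, mem_union, mem_insert]; omega
  have hdisj :
      Disjoint (Icc (-(M : ℤ)) M) (insert ((M : ℤ) + 1) (Icc ((M : ℤ) + 2) (2 * M + 1))) := by
    rw [disjoint_left]; intro x; simp only [mem_Icc, mem_insert]; omega
  have hreflect : ∑ k ∈ Icc ((M : ℤ) + 2) (2 * M + 1), g k
      = ∑ k ∈ Icc 1 M, g (2 * (M + 1) - k) := by
    refine sum_nbij' (fun k => (2 * (M + 1) - k).toNat) (fun k => 2 * (M + 1) - k)
      ?_ ?_ ?_ ?_ ?_ <;>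
      intro k hk <;> simp only [mem_Icc] at hk ⊢ <;> try omega
    congr 1; omega
  rw [hsplit, sum_union hdisj, sum_insert (by simp), sum_Icc_neg_fold, hreflect, sum_add_distrib,
    sum_add_distrib, sum_add_distrib]
  abel

theorem sum_fin_add_two (F : ℕ → β) (M : ℕ) :
    ∑ k : Fin (M + 2), F k = F 0 + ∑ k ∈ Icc 1 M, F k + F (M + 1) := by
  rw [Fin.sum_univ_eq_sum_range F, sum_range_succ, sum_range_succ', range_eq_Ico, sum_Ico_add',
    zero_add, Ico_add_one_right_eq_Icc]
  abel

end Folding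

def IsAntiReflective (N : ℤ) (f : ℤ → ℝ) : Prop :=
  (∀ t, f (-t) = 2 * f 0 - f t) ∧ ∀ t, f (2 * N - t) = 2 * f N - f t

theorem isAntiReflective_affine (N : ℤ) (a b : ℝ) : IsAntiReflective N fun t => a + b * t :=
  ⟨fun t => by push_cast; ring, fun t => by push_cast; ring⟩

theorem isAntiReflective_sin {N : ℤ} (c : ℝ) {θ : ℝ} (h : sin (N * θ) = 0) :
    IsAntiReflective N fun t => c * sin (t * θ) := by
  refine ⟨fun t => by simp [neg_mul, sin_neg], fun t => ?_⟩
  have hcos : cos (2 * (N * θ)) = 1 := by rw [cos_two_mul, cos_sq', h]; ring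
  push_cast
  rw [h, sub_mul, mul_assoc, sin_sub, sin_two_mul, h, hcos]
  ring

def symmConv (l : ℕ) (w : ℕ → ℝ) (f : ℤ → ℝ) (i : ℤ) : ℝ :=
  w 0 * f i + ∑ m ∈ Icc 1 l, w m * (f (i - m) + f (i + m))

theorem symmConv_affine (l : ℕ) (w : ℕ → ℝ) (a b : ℝ) (i : ℤ) :
    symmConv l w (fun t => a + b * t) i = (w 0 + 2 * ∑ m ∈ Icc 1 l, w m) * (a + b * i) := by
  rw [symmConv, add_mul, mul_sum, sum_mul]
  congr 1
  refine sum_congr rfl fun m _ => ?_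
  push_cast
  ring

theorem symmConv_sin (l : ℕ) (w : ℕ → ℝ) (c θ : ℝ) (i : ℤ) :
    symmConv l w (fun t => c * sin (t * θ)) i
      = (w 0 + 2 * ∑ m ∈ Icc 1 l, w m * cos (m * θ)) * (c * sin (i * θ)) := by
  rw [symmConv, add_mul, mul_sum, sum_mul]
  congr 1
  refine sum_congr rfl fun m _ => ?_
  push_cast
  rw [sub_mul, add_mul, sin_sub, sin_add]
  ring

theorem antiReflectiveMatrix_mulVec_apply_boundary {n l : ℕ} {w : ℕ → ℝ}
    (hsum : w 0 + 2 * ∑ j ∈ Icc 1 l, w j = 1) (v : Fin n → ℝ) {i : Fin n}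
    (hi : (i : ℕ) = 0 ∨ (i : ℕ) = n - 1) : (antiReflectiveMatrix n l w *ᵥ v) i = v i := by
  have hrow : ∀ k, antiReflectiveMatrix n l w i k = if k = i then 1 else 0 := by
    intro k
    have h1 : 2 * ∑ k ∈ Icc 1 l, w k + w 0 = 1 := by linarith
    by_cases hi0 : (i : ℕ) = 0
    · simp [antiReflectiveMatrix, hi0, h1, Fin.ext_iff]
    · have hn : n - 1 ≠ 0 := by omega
      simp [antiReflectiveMatrix, hi.resolve_left hi0, hn, h1, Fin.ext_iff]
  simp [mulVec, dotProduct, hrow]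

noncomputable def antiReflectiveEigenvalue (n l : ℕ) (w : ℕ → ℝ) (i : Fin n) : ℝ :=
  if (i : ℕ) = 0 ∨ (i : ℕ) = n - 1 then 1
  else w 0 + 2 * ∑ j ∈ Icc 1 l, w j * cos (j * (i : ℕ) * π / (n - 1))

/- Matrices of size `n = M + 2`: the last index is `N = M + 1`, the interior indices form
`Icc 1 M`. -/

section

variable {M l : ℕ} {w : ℕ → ℝ}

theorem sum_Icc_extend_of_vanish (hzero : ∀ k, l < k → w k = 0) {a b : ℕ} (hb : l ≤ b) :
    ∑ j ∈ Icc a l, w j = ∑ j ∈ Icc a b, w j :=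
  sum_subset (Icc_subset_Icc_right hb) fun j _ hjl => hzero j (by simp_all)

theorem symmConv_eq_sum_Icc (hl : l ≤ M + 1) (hzero : ∀ k, l < k → w k = 0) (f : ℤ → ℝ)
    {i : ℕ} (hi0 : i ≠ 0) (hiM : i ≤ M) :
    symmConv l w f i = ∑ k ∈ Icc (-(M : ℤ)) (2 * M + 1), w ((i : ℤ) - k).natAbs * f k := by
  have hfold := sum_Icc_neg_fold (fun m => w m.natAbs * f (i - m)) l
  simp only [Int.natAbs_neg, Int.natAbs_natCast, sub_neg_eq_add, Int.natAbs_zero, sub_zero] at hfold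
  calc symmConv l w f i = ∑ m ∈ Icc (-(l : ℤ)) l, w m.natAbs * f (i - m) := by
        simp only [hfold, symmConv, mul_add]
    _ = ∑ m ∈ Icc ((i : ℤ) - (2 * M + 1)) (i + M), w m.natAbs * f (i - m) := by
        refine sum_subset (fun m hm => ?_) fun m _ hm => ?_
        · simp only [mem_Icc] at hm ⊢; omega
        · simp only [mem_Icc] at hm
          rw [hzero _ (by omega), zero_mul]
    _ = ∑ k ∈ Icc (-(M : ℤ)) (2 * M + 1), w ((i : ℤ) - k).natAbs * f k := by
        refine sum_nbij' (i - ·) (i - ·) ?_ ?_ ?_ ?_ ?_ <;> intro m hm <;>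
          simp only [mem_Icc, sub_sub_cancel] at hm ⊢ <;> omega

theorem antiReflectiveMatrix_mulVec_apply_of_ne (f : ℤ → ℝ) {i : Fin (M + 2)}
    (hi0 : (i : ℕ) ≠ 0) (hiM : (i : ℕ) ≠ M + 1) :
    (antiReflectiveMatrix (M + 2) l w *ᵥ fun k => f k) i
      = (2 * ∑ j ∈ Icc ((i : ℕ) + 1) l, w j + w i) * f 0
        + (2 * ∑ j ∈ Icc (M + 2 - i) l, w j + w (M + 1 - i)) * f (M + 1)
        + ∑ k ∈ Icc 1 M,
            (w ((i : ℤ) - k).natAbs - (w (i + k) + w (2 * (M + 2) - 2 - i - k))) * f k := by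
  simp only [mulVec, dotProduct, antiReflectiveMatrix, of_apply, if_neg hi0,
    show M + 2 - 1 = M + 1 from rfl, if_neg hiM]
  rw [sum_fin_add_two (fun k => (if k = 0 then 2 * ∑ j ∈ Icc ((i : ℕ) + 1) l, w j + w i
      else if k = M + 1 then 2 * ∑ j ∈ Icc (M + 2 - i) l, w j + w (M + 1 - i)
      else w ((i : ℤ) - k).natAbs - (w (i + k) + w (2 * (M + 2) - 2 - i - k))) * f k),
    if_pos rfl, if_neg (by omega), if_pos rfl, add_right_comm]
  congr 1
  refine sum_congr rfl fun k hk => ?_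
  rw [mem_Icc] at hk
  rw [if_neg (by omega), if_neg (by omega)]

theorem antiReflectiveMatrix_mulVec_apply_interior (hl : l ≤ M + 1)
    (hzero : ∀ k, l < k → w k = 0) {f : ℤ → ℝ} (hf : IsAntiReflective (M + 1) f)
    {i : Fin (M + 2)} (hi0 : (i : ℕ) ≠ 0) (hiM : (i : ℕ) ≠ M + 1) :
    (antiReflectiveMatrix (M + 2) l w *ᵥ fun k => f k) i = symmConv l w f i := by
  have hi : (i : ℕ) ≤ M := by omega
  have hshift : ∑ k ∈ Icc 1 M, w (i + k) = ∑ j ∈ Icc ((i : ℕ) + 1) l, w j := by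
    rw [sum_Icc_extend_of_vanish hzero (b := i + M) (by omega), ← map_add_left_Icc, sum_map]
    rfl
  have hreflect :
      ∑ k ∈ Icc 1 M, w (2 * (M + 2) - 2 - i - k) = ∑ j ∈ Icc (M + 2 - i) l, w j := by
    rw [sum_Icc_extend_of_vanish hzero (b := 2 * M + 1 - i) (by omega)]
    refine sum_nbij' (2 * (M + 2) - 2 - i - ·) (2 * (M + 2) - 2 - i - ·) ?_ ?_ ?_ ?_ ?_ <;>
      intro k hk <;> simp only [mem_Icc] at hk ⊢ <;> omega
  have hmid : ∀ k ∈ Icc 1 M,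
      w ((i : ℤ) - k).natAbs * f k + w ((i : ℤ) - -(k : ℤ)).natAbs * f (-k)
        + w ((i : ℤ) - (2 * (M + 1) - k)).natAbs * f (2 * (M + 1) - k)
      = (w ((i : ℤ) - k).natAbs - (w (i + k) + w (2 * (M + 2) - 2 - i - k))) * f k
        + 2 * f 0 * w (i + k) + 2 * f (M + 1) * w (2 * (M + 2) - 2 - i - k) := by
    intro k hk
    rw [mem_Icc] at hk
    rw [hf.1, hf.2, show ((i : ℤ) - -(k : ℤ)).natAbs = i + k by omega,
      show ((i : ℤ) - (2 * (M + 1) - k)).natAbs = 2 * (M + 2) - 2 - i - k by omega]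
    ring
  rw [antiReflectiveMatrix_mulVec_apply_of_ne f hi0 hiM, symmConv_eq_sum_Icc hl hzero f hi0 hi,
    sum_Icc_antiReflect_fold, sum_congr rfl hmid, sum_add_distrib, sum_add_distrib, ← mul_sum,
    ← mul_sum, hshift, hreflect, show ((i : ℤ) - 0).natAbs = i by omega,
    show ((i : ℤ) - (M + 1)).natAbs = M + 1 - i by omega]
  ring

theorem antiReflectiveMatrix_mulVec_eq_smul (hl : l ≤ M + 1) (hzero : ∀ k, l < k → w k = 0)
    (hsum : w 0 + 2 * ∑ j ∈ Icc 1 l, w j = 1) {f : ℤ → ℝ} {μ : ℝ}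
    (hf : IsAntiReflective (M + 1) f) (hconv : ∀ i, symmConv l w f i = μ * f i)
    (h0 : μ * f 0 = f 0) (hM : μ * f (M + 1) = f (M + 1)) :
    (antiReflectiveMatrix (M + 2) l w *ᵥ fun k => f k) = μ • fun k : Fin (M + 2) => f k := by
  funext i
  rw [Pi.smul_apply, smul_eq_mul]
  by_cases hi : (i : ℕ) = 0 ∨ (i : ℕ) = M + 1
  · rw [antiReflectiveMatrix_mulVec_apply_boundary hsum _ (by omega)]
    rcases hi with hi | hi <;> simp only [hi] <;> push_cast <;> simp only [h0, hM]
  · obtain ⟨hi0, hiM⟩ := not_or.mp hi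
    rw [antiReflectiveMatrix_mulVec_apply_interior hl hzero hf hi0 hiM, hconv]

theorem antiReflectiveMatrix_mulVec_affine (hl : l ≤ M + 1) (hzero : ∀ k, l < k → w k = 0)
    (hsum : w 0 + 2 * ∑ j ∈ Icc 1 l, w j = 1) (a b : ℝ) :
    (antiReflectiveMatrix (M + 2) l w *ᵥ fun k => a + b * (k : ℕ))
      = fun k : Fin (M + 2) => a + b * (k : ℕ) := by
  have := antiReflectiveMatrix_mulVec_eq_smul hl hzero hsum (isAntiReflective_affine _ a b)
    (μ := 1) (fun i => by rw [symmConv_affine, hsum]) (one_mul _) (one_mul _)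
  simpa using this

theorem antiReflectiveMatrix_mulVec_sin (hl : l ≤ M + 1) (hzero : ∀ k, l < k → w k = 0)
    (hsum : w 0 + 2 * ∑ j ∈ Icc 1 l, w j = 1) (c : ℝ) {θ : ℝ}
    (hθ : sin ((M + 1) * θ) = 0) :
    (antiReflectiveMatrix (M + 2) l w *ᵥ fun k => c * sin ((k : ℕ) * θ))
      = (w 0 + 2 * ∑ m ∈ Icc 1 l, w m * cos (m * θ))
          • fun k : Fin (M + 2) => c * sin ((k : ℕ) * θ) := by
  have := antiReflectiveMatrix_mulVec_eq_smul hl hzero hsum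
    (isAntiReflective_sin (N := M + 1) c (by push_cast; exact hθ)) (symmConv_sin l w c θ)
    (by simp) (by push_cast; simp [hθ])
  simpa using this

theorem antiReflectiveTransform_apply_of_ne {j : Fin (M + 2)} (hj0 : (j : ℕ) ≠ 0)
    (hjM : (j : ℕ) ≠ M + 1) (k : Fin (M + 2)) :
    antiReflectiveTransform (M + 2) k j
      = √(2 / (M + 1)) * sin ((k : ℕ) * ((j : ℕ) * π / (M + 1))) := by
  have hM : ((M + 2 : ℕ) : ℝ) - 1 = M + 1 := by push_cast; ring
  simp only [antiReflectiveTransform, of_apply, if_neg hj0, show M + 2 - 1 = M + 1 from rfl,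
    if_neg hjM, hM]
  split_ifs with hk
  · rcases hk with hk | hk
    · simp [hk]
    · rw [hk, Nat.cast_succ, mul_div_cancel₀ _ (by positivity), sin_nat_mul_pi, mul_zero]
  · rw [mul_div_assoc', mul_assoc]

theorem antiReflectiveEigenvalue_of_ne {j : Fin (M + 2)} (hj0 : (j : ℕ) ≠ 0)
    (hjM : (j : ℕ) ≠ M + 1) :
    antiReflectiveEigenvalue (M + 2) l w j
      = w 0 + 2 * ∑ m ∈ Icc 1 l, w m * cos (m * ((j : ℕ) * π / (M + 1))) := by
  rw [antiReflectiveEigenvalue, if_neg (by omega), show ((M + 2 : ℕ) : ℝ) - 1 = M + 1 by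
    push_cast; ring]
  simp only [mul_div_assoc', mul_assoc]

theorem antiReflectiveMatrix_mulVec_transform_col (hl : l ≤ M + 1)
    (hzero : ∀ k, l < k → w k = 0)
    (hsum : w 0 + 2 * ∑ j ∈ Icc 1 l, w j = 1) (j : Fin (M + 2)) :
    (antiReflectiveMatrix (M + 2) l w *ᵥ fun k => antiReflectiveTransform (M + 2) k j)
      = antiReflectiveEigenvalue (M + 2) l w j
          • fun k => antiReflectiveTransform (M + 2) k j := by
  set η := √(∑ k ∈ range (M + 2), (k : ℝ) ^ 2)
  by_cases hj0 : (j : ℕ) = 0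
  · have hM : ((M + 2 : ℕ) : ℝ) - 1 = M + 1 := by push_cast; ring
    have hcol : (fun k => antiReflectiveTransform (M + 2) k j)
        = fun k : Fin (M + 2) => (M + 1) / η + (-1 / η) * (k : ℕ) := by
      funext k
      simp only [antiReflectiveTransform, of_apply, if_pos hj0, hM]
      ring
    rw [antiReflectiveEigenvalue, if_pos (Or.inl hj0), one_smul, hcol,
      antiReflectiveMatrix_mulVec_affine hl hzero hsum]
  by_cases hjM : (j : ℕ) = M + 1
  · have hcol : (fun k => antiReflectiveTransform (M + 2) k j)
        = fun k : Fin (M + 2) => 0 + (1 / η) * (k : ℕ) := by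
      funext k
      simp only [antiReflectiveTransform, of_apply, if_neg hj0,
        show M + 2 - 1 = M + 1 from rfl, if_pos hjM]
      ring
    rw [antiReflectiveEigenvalue, if_pos (Or.inr (by omega)), one_smul, hcol,
      antiReflectiveMatrix_mulVec_affine hl hzero hsum]
  have hθ : sin ((M + 1) * ((j : ℕ) * π / (M + 1))) = 0 := by
    rw [mul_div_cancel₀ _ (by positivity)]
    exact sin_nat_mul_pi _
  rw [antiReflectiveEigenvalue_of_ne hj0 hjM, funext (antiReflectiveTransform_apply_of_ne hj0 hjM),
    antiReflectiveMatrix_mulVec_sin hl hzero hsum _ hθ]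

theorem antiReflectiveMatrix_mul_antiReflectiveTransform (hl : l ≤ M + 1)
    (hzero : ∀ k, l < k → w k = 0) (hsum : w 0 + 2 * ∑ j ∈ Icc 1 l, w j = 1) :
    antiReflectiveMatrix (M + 2) l w * antiReflectiveTransform (M + 2)
      = antiReflectiveTransform (M + 2) * diagonal (antiReflectiveEigenvalue (M + 2) l w) := by
  ext i j
  rw [mul_diagonal, mul_comm]
  exact congrFun (antiReflectiveMatrix_mulVec_transform_col hl hzero hsum j) i

end

section

variable (M : ℕ)

theorem antiReflectiveTransform_mulVec_apply_zero (v : Fin (M + 2) → ℝ) :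
    (antiReflectiveTransform (M + 2) *ᵥ v) 0
      = (M + 1) / √(∑ k ∈ range (M + 2), (k : ℝ) ^ 2) * v 0 := by
  rw [mulVec, dotProduct, Fintype.sum_eq_single 0 fun k hk => ?_]
  · simp only [antiReflectiveTransform, of_apply, Fin.val_zero, if_true]
    push_cast
    ring
  · have hk0 : (k : ℕ) ≠ 0 := fun h => hk (Fin.ext h)
    simp only [antiReflectiveTransform, of_apply, Fin.val_zero, if_neg hk0, true_or, if_true]
    split_ifs <;> simp

theorem antiReflectiveTransform_mulVec_apply_last (v : Fin (M + 2) → ℝ) :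
    (antiReflectiveTransform (M + 2) *ᵥ v) (Fin.last _)
      = (M + 1) / √(∑ k ∈ range (M + 2), (k : ℝ) ^ 2) * v (Fin.last _) := by
  rw [mulVec, dotProduct, Fintype.sum_eq_single (Fin.last _) fun k hk => ?_]
  · simp only [antiReflectiveTransform, of_apply, Fin.val_last, show M + 2 - 1 = M + 1 from rfl,
      Nat.add_one_ne_zero, if_false, if_true]
    push_cast
    ring
  · have hkM : (k : ℕ) ≠ M + 1 := fun h => hk (Fin.ext h)
    simp only [antiReflectiveTransform, of_apply, Fin.val_last, show M + 2 - 1 = M + 1 from rfl,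
      if_neg hkM, or_true, if_true]
    split_ifs <;> push_cast <;> ring

theorem antiReflectiveTransform_mulVec_of_ends {v : Fin (M + 2) → ℝ} (h0 : v 0 = 0)
    (hM : v (Fin.last _) = 0) :
    antiReflectiveTransform (M + 2) *ᵥ v = √(2 / (M + 1)) • sineTransform (M + 1) *ᵥ v := by
  funext i
  simp only [mulVec, dotProduct, Pi.smul_apply, smul_eq_mul, mul_sum]
  refine sum_congr rfl fun k _ => ?_
  by_cases hk0 : (k : ℕ) = 0
  · simp [show k = 0 from Fin.ext hk0, h0]
  by_cases hkM : (k : ℕ) = M + 1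
  · simp [show k = Fin.last _ from Fin.ext hkM, hM]
  simp only [antiReflectiveTransform, sineTransform, of_apply, if_neg hk0,
    show M + 2 - 1 = M + 1 from rfl, if_neg hkM]
  split_ifs with hi
  · rcases hi with hi | hi
    · simp [hi]
    · rw [hi, show ((M + 1 : ℕ) : ℝ) * (k : ℕ) * π / (M + 1 : ℕ) = (k : ℕ) * π by
          field_simp, sin_nat_mul_pi]
      ring
  · rw [show ((M + 2 : ℕ) : ℝ) - 1 = M + 1 by push_cast; ring]
    push_cast
    ring

theorem antiReflectiveTransform_isUnit : IsUnit (antiReflectiveTransform (M + 2)) := by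
  rw [isUnit_iff_isUnit_det, isUnit_iff_ne_zero]
  intro hdet
  obtain ⟨v, hv, hQv⟩ := exists_mulVec_eq_zero_iff.mpr hdet
  have hη : (M + 1) / √(∑ k ∈ range (M + 2), (k : ℝ) ^ 2) ≠ 0 := by
    have : 0 < ∑ k ∈ range (M + 2), (k : ℝ) ^ 2 :=
      sum_pos' (fun k _ => by positivity) ⟨1, by simp, by norm_num⟩
    positivity
  have h0 : v 0 = 0 := by
    have := antiReflectiveTransform_mulVec_apply_zero M v
    rw [hQv, Pi.zero_apply, eq_comm] at this
    exact (mul_eq_zero.mp this).resolve_left hη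
  have hM : v (Fin.last _) = 0 := by
    have := antiReflectiveTransform_mulVec_apply_last M v
    rw [hQv, Pi.zero_apply, eq_comm] at this
    exact (mul_eq_zero.mp this).resolve_left hη
  have hS : sineTransform (M + 1) *ᵥ v = 0 := by
    rw [antiReflectiveTransform_mulVec_of_ends M h0 hM] at hQv
    exact (smul_eq_zero.mp hQv).resolve_left (by positivity)
  refine hv (funext fun j => ?_)
  by_cases hj0 : (j : ℕ) = 0
  · rwa [show j = 0 from Fin.ext hj0]
  by_cases hjM : (j : ℕ) = M + 1
  · rwa [show j = Fin.last _ from Fin.ext hjM]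
  exact sineTransform_mulVec_eq_zero hS hj0 hjM

end

theorem stmt_15_general (n l : ℕ) (hn : 3 ≤ n)
    (hln : l ≤ (n - 1) / 2) (w : ℕ → ℝ)
    (hzero : ∀ k, l < k → w k = 0)
    (hsum : w 0 + 2 * ∑ j ∈ Finset.Icc 1 l, w j = 1)
    (D : Matrix (Fin n) (Fin n) ℝ)
    (hD : D = Matrix.diagonal (fun i : Fin n =>
      if i.val = 0 ∨ i.val = n - 1 then (1 : ℝ)
      else w 0 + 2 * ∑ j ∈ Finset.Icc 1 l,
        w j * Real.cos ((j : ℝ) * (i.val : ℝ) * Real.pi / ((n : ℝ) - 1)))) :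
    antiReflectiveMatrix n l w * antiReflectiveTransform n
        = antiReflectiveTransform n * D ∧
    IsUnit (antiReflectiveTransform n) ∧
    antiReflectiveMatrix n l w
        = antiReflectiveTransform n * D * (antiReflectiveTransform n)⁻¹ := by
  obtain ⟨M, rfl⟩ : ∃ M, n = M + 2 := ⟨n - 2, by omega⟩
  have hWQ : antiReflectiveMatrix (M + 2) l w * antiReflectiveTransform (M + 2)
      = antiReflectiveTransform (M + 2) * D := by
    rw [hD]
    exact antiReflectiveMatrix_mul_antiReflectiveTransform (by omega) hzero hsum
  have hQ := antiReflectiveTransform_isUnit M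
  refine ⟨hWQ, hQ, ?_⟩
  rw [← hWQ, Matrix.mul_assoc, mul_nonsing_inv _ ((isUnit_iff_isUnit_det _).mp hQ),
    Matrix.mul_one]

/-- The ART matrix diagonalizes the Anti-Reflective matrix:
`W^AR Q^AR = Q^AR D` with `D = diag(1, λ̂_1, …, λ̂_{n-2}, 1)`,
`λ̂_i = w_0 + 2 ∑_{j=1}^l w_j cos(j i π/(n-1))`; moreover `Q^AR` is invertible,
so `W^AR = Q^AR D (Q^AR)⁻¹`. -/
theorem stmt_15 (n l : ℕ) (hn : 3 ≤ n)
    (hl : 0 < l) (hln : l ≤ (n - 1) / 2) (w : ℕ → ℝ)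
    (hpos : ∀ j, j ≤ l → 0 < w j)
    (hzero : ∀ k, l < k → w k = 0)
    (hsum : w 0 + 2 * ∑ j ∈ Finset.Icc 1 l, w j = 1)
    (D : Matrix (Fin n) (Fin n) ℝ)
    (hD : D = Matrix.diagonal (fun i : Fin n =>
      if i.val = 0 ∨ i.val = n - 1 then (1 : ℝ)
      else w 0 + 2 * ∑ j ∈ Finset.Icc 1 l,
        w j * Real.cos ((j : ℝ) * (i.val : ℝ) * Real.pi / ((n : ℝ) - 1)))) :
    antiReflectiveMatrix n l w * antiReflectiveTransform n
        = antiReflectiveTransform n * D ∧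
    IsUnit (antiReflectiveTransform n) ∧
    antiReflectiveMatrix n l w
        = antiReflectiveTransform n * D * (antiReflectiveTransform n)⁻¹ :=
  stmt_15_general n l hn hln w hzero hsum D hD
end

section
/- Let W ∈ ℝ^{n×n} be diagonalizable as W = Q D Q^{−1}, where Q ∈ ℝ^{n×n} is invertible with spectral norm ‖Q‖₂ ≤ α, and D is diagonal with entries d_1, …, d_n ∈ [0,1]. Let β be the number of indices with d_i = 1 and ζ the number of indices with d_i = 0. Then for every s ∈ ℝ^n and every k ≥ 1, ‖(I−W)^{k+1} s − (I−W)^{k} s‖₂ ≤ α · √(n−β−ζ) · (k^k/(k+1)^{k+1}) · ‖Q^{−1} s‖_∞. Consequently, for every δ > 0 there exists k₀ ∈ ℕ such that ‖(I−W)^{k+1} s − (I−W)^{k} s‖₂ < δ for all k ≥ k₀; one may take the minimal k₀ with k₀^{k₀}/(k₀+1)^{k₀+1} < δ/(α ‖Q^{−1} s‖_∞ √(n−β−ζ)) provided n − β − ζ > 0. -/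
/-! Conjugating by `Q` gives `(1 - W)^(k+1) - (1 - W)^k = -Q diag((1 - dᵢ)^k dᵢ) Q⁻¹`. The diagonal
entries vanish when `dᵢ ∈ {0, 1}` and are at most `k^k / (k+1)^(k+1)` otherwise, so `‖Q‖₂ ≤ α`
and `‖v‖₂ ≤ √(#supp v) ‖v‖_∞` give the bound. The peak value `k^k / (k+1)^(k+1)` decreases to `0`,
which yields the stopping index. -/

open Filter Topology Finset Matrix

/-- The maximum of `(1 - x) ^ k * x` on `[0, 1]`, attained at `x = 1 / (k + 1)`. -/
noncomputable def powPeak (k : ℕ) : ℝ := (k : ℝ) ^ k / ((k : ℝ) + 1) ^ (k + 1)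

lemma powPeak_nonneg (k : ℕ) : 0 ≤ powPeak k := by
  unfold powPeak; positivity

lemma powPeak_eq (k : ℕ) : powPeak k = (1 - 1 / ((k : ℝ) + 1)) ^ k * (1 / ((k : ℝ) + 1)) := by
  rw [show 1 - 1 / ((k : ℝ) + 1) = k / (k + 1) by field_simp; ring, div_pow, powPeak, pow_succ]
  field_simp

lemma one_sub_pow_mul_le_powPeak {x : ℝ} (hx0 : 0 ≤ x) (hx1 : x ≤ 1) (k : ℕ) :
    (1 - x) ^ k * x ≤ powPeak k := by
  rcases Nat.eq_zero_or_pos k with rfl | hk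
  · simpa [powPeak] using hx1
  -- With `a = (k + 1) x - 1` the claim reduces to `(1 - a / k) ^ k (1 + a) ≤ exp (-a) exp a = 1`.
  set a : ℝ := ((k : ℝ) + 1) * x - 1
  have hk' : (0 : ℝ) < k := by exact_mod_cast hk
  have ha1 : a + 1 = ((k : ℝ) + 1) * x := by ring
  have hak : a ≤ k := by nlinarith
  have hscale : ((k : ℝ) + 1) * (1 - x) = k * (1 - a / k) := by field_simp; ring
  have hkey : (1 - a / k) ^ k * (a + 1) ≤ 1 := calc
    (1 - a / k) ^ k * (a + 1) ≤ Real.exp (-a) * Real.exp a :=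
      mul_le_mul (Real.one_sub_div_pow_le_exp_neg hak) (Real.add_one_le_exp a)
        (by rw [ha1]; positivity) (Real.exp_pos _).le
    _ = 1 := by rw [← Real.exp_add, neg_add_cancel, Real.exp_zero]
  rw [powPeak, le_div_iff₀ (by positivity)]
  calc (1 - x) ^ k * x * ((k : ℝ) + 1) ^ (k + 1)
      = (((k : ℝ) + 1) * (1 - x)) ^ k * (((k : ℝ) + 1) * x) := by
        rw [mul_pow]; ring
    _ = (k : ℝ) ^ k * ((1 - a / k) ^ k * (a + 1)) := by rw [hscale, mul_pow, ha1]; ring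
    _ ≤ (k : ℝ) ^ k := mul_le_of_le_one_right (by positivity) hkey

lemma powPeak_antitone : Antitone powPeak := by
  refine antitone_nat_of_succ_le fun k => ?_
  set x : ℝ := 1 / (((k + 1 : ℕ) : ℝ) + 1)
  have hx0 : 0 ≤ x := by positivity
  have hx1 : x ≤ 1 := div_le_one_of_le₀ (by push_cast; linarith) (by positivity)
  calc powPeak (k + 1) = (1 - x) ^ (k + 1) * x := powPeak_eq (k + 1)
    _ ≤ (1 - x) ^ k * x :=
      mul_le_mul_of_nonneg_right (pow_le_pow_of_le_one (by linarith) (by linarith) k.le_succ) hx0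
    _ ≤ powPeak k := one_sub_pow_mul_le_powPeak hx0 hx1 k

lemma tendsto_powPeak_atTop : Tendsto powPeak atTop (𝓝 0) := by
  refine tendsto_of_tendsto_of_tendsto_of_le_of_le tendsto_const_nhds
    tendsto_one_div_add_atTop_nhds_zero_nat powPeak_nonneg fun k => ?_
  rw [powPeak_eq]
  refine mul_le_of_le_one_left (by positivity) (pow_le_one₀ ?_ ?_)
  · rw [sub_nonneg]; exact div_le_one_of_le₀ (by simp) (by positivity)
  · linarith [show (0 : ℝ) ≤ 1 / ((k : ℝ) + 1) by positivity]

lemma one_sub_pow_succ_sub_one_sub_pow {R : Type*} [Ring R] (x : R) (k : ℕ) :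
    (1 - x) ^ (k + 1) - (1 - x) ^ k = -((1 - x) ^ k * x) := by
  rw [pow_succ, mul_sub, mul_one]
  abel

lemma one_sub_conj_pow_mul_conj {R : Type*} [Ring R] (u : Rˣ) (x : R) (k : ℕ) :
    (1 - u * x * ↑u⁻¹) ^ k * (u * x * ↑u⁻¹) = u * ((1 - x) ^ k * x) * ↑u⁻¹ := by
  have hconj (y : R) : MulSemiringAction.toRingHom _ R (ConjAct.toConjAct u) y = u * y * ↑u⁻¹ :=
    ConjAct.units_smul_def _ y
  simp only [← hconj, map_mul, map_pow, map_sub, map_one]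

lemma one_sub_pow_succ_sub_one_sub_pow_of_eq_conj_diagonal {n : Type*} [Fintype n]
    [DecidableEq n] {W Q : Matrix n n ℝ} {d : n → ℝ} (hQ : IsUnit Q.det)
    (hW : W = Q * diagonal d * Q⁻¹) (k : ℕ) :
    (1 - W) ^ (k + 1) - (1 - W) ^ k = -(Q * diagonal (fun i => (1 - d i) ^ k * d i) * Q⁻¹) := by
  have hdiag : (1 - diagonal d) ^ k * diagonal d = diagonal fun i => (1 - d i) ^ k * d i := by
    rw [← diagonal_one, diagonal_sub, diagonal_pow, diagonal_mul_diagonal]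
    rfl
  have hconj := one_sub_conj_pow_mul_conj (nonsingInvUnit Q hQ) (diagonal d) k
  rw [hdiag] at hconj
  rw [one_sub_pow_succ_sub_one_sub_pow, hW]
  exact congrArg Neg.neg hconj

lemma EuclideanSpace.norm_le_sqrt_card_mul {ι : Type*} [Fintype ι] (v : EuclideanSpace ℝ ι)
    (T : Finset ι) {c : ℝ} (hc : 0 ≤ c) (hT : ∀ i ∉ T, v i = 0) (hv : ∀ i ∈ T, |v i| ≤ c) :
    ‖v‖ ≤ √(#T : ℝ) * c := by
  rw [EuclideanSpace.norm_eq, ← Real.sqrt_sq hc, ← Real.sqrt_mul (Nat.cast_nonneg _)]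
  refine Real.sqrt_le_sqrt ?_
  rw [← sum_subset (subset_univ T) fun i _ hi => by simp [hT i hi]]
  simpa using sum_le_card_nsmul T (fun i => ‖v i‖ ^ 2) (c ^ 2) fun i hi =>
    pow_le_pow_left₀ (norm_nonneg _) (hv i hi) 2

lemma Finset.card_filter_not_or {α : Type*} (s : Finset α) (p q : α → Prop) [DecidablePred p]
    [DecidablePred q] (hpq : ∀ a ∈ s, p a → ¬q a) :
    #(s.filter fun a => ¬(p a ∨ q a)) = #s - #(s.filter p) - #(s.filter q) := by
  classical
  have hor : #(s.filter fun a => p a ∨ q a) = #(s.filter p) + #(s.filter q) := by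
    rw [filter_or, card_union_of_disjoint (disjoint_filter.2 hpq)]
  have := card_filter_add_card_filter_not (s := s) fun a => p a ∨ q a
  omega

lemma norm_one_sub_pow_succ_mulVec_sub_le {ι : Type*} [Fintype ι] [DecidableEq ι]
    {W Q : Matrix ι ι ℝ} {d : ι → ℝ} {α : ℝ} (hQ : IsUnit Q.det)
    (hα : ∀ x : EuclideanSpace ℝ ι, ‖toEuclideanLin Q x‖ ≤ α * ‖x‖)
    (hW : W = Q * diagonal d * Q⁻¹) (hd : ∀ i, d i ∈ Set.Icc (0 : ℝ) 1) (s : ι → ℝ) {k : ℕ}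
    (hk : 1 ≤ k) :
    ‖WithLp.toLp 2 ((1 - W) ^ (k + 1) *ᵥ s - (1 - W) ^ k *ᵥ s)‖
      ≤ α * √(#{i | ¬(d i = 1 ∨ d i = 0)} : ℝ) * powPeak k * ‖Q⁻¹ *ᵥ s‖ := by
  rcases isEmpty_or_nonempty ι with hι | hι
  · simp [Subsingleton.elim _ (0 : EuclideanSpace ℝ ι)]
  set w := Q⁻¹ *ᵥ s
  set v : ι → ℝ := fun i => (1 - d i) ^ k * d i * w i
  have hdiff : (1 - W) ^ (k + 1) *ᵥ s - (1 - W) ^ k *ᵥ s = -(Q *ᵥ v) := by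
    rw [← sub_mulVec, one_sub_pow_succ_sub_one_sub_pow_of_eq_conj_diagonal hQ hW, neg_mulVec,
      ← mulVec_mulVec, ← mulVec_mulVec]
    congr 2
    ext i
    exact mulVec_diagonal _ _ i
  have hv : ‖WithLp.toLp 2 v‖ ≤ √(#{i | ¬(d i = 1 ∨ d i = 0)} : ℝ) * (powPeak k * ‖w‖) := by
    refine EuclideanSpace.norm_le_sqrt_card_mul _ _ (by positivity [powPeak_nonneg k])
      (fun i hi => ?_) (fun i _ => ?_)
    · obtain h | h : d i = 1 ∨ d i = 0 := by
        simpa only [mem_filter, mem_univ, true_and, not_not] using hi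
      · simp [v, h, zero_pow (Nat.one_le_iff_ne_zero.1 hk)]
      · simp [v, h]
    · have hdi := hd i
      have hpow : 0 ≤ (1 - d i) ^ k * d i := mul_nonneg (pow_nonneg (by linarith [hdi.2]) _) hdi.1
      rw [PiLp.toLp_apply, abs_mul, abs_of_nonneg hpow]
      exact mul_le_mul (one_sub_pow_mul_le_powPeak hdi.1 hdi.2 k) (norm_le_pi_norm w i)
        (abs_nonneg _) (powPeak_nonneg k)
  have hα0 : 0 ≤ α := by
    simpa using (norm_nonneg _).trans (hα (EuclideanSpace.single hι.some 1))
  calc ‖WithLp.toLp 2 ((1 - W) ^ (k + 1) *ᵥ s - (1 - W) ^ k *ᵥ s)‖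
      = ‖toEuclideanLin Q (WithLp.toLp 2 v)‖ := by rw [hdiff, WithLp.toLp_neg, norm_neg]; rfl
    _ ≤ α * ‖WithLp.toLp 2 v‖ := hα _
    _ ≤ α * (√(#{i | ¬(d i = 1 ∨ d i = 0)} : ℝ) * (powPeak k * ‖w‖)) := by gcongr
    _ = _ := by ring

lemma exists_forall_ge_lt_of_le_mul_powPeak {a : ℕ → ℝ} {C δ : ℝ} (hδ : 0 < δ)
    (ha : ∀ k, 1 ≤ k → a k ≤ C * powPeak k) : ∃ k₀, ∀ k, k₀ ≤ k → a k < δ := by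
  have hlim : Tendsto (fun k => C * powPeak k) atTop (𝓝 0) := by
    simpa using tendsto_powPeak_atTop.const_mul C
  obtain ⟨k₀, hk₀⟩ :=
    eventually_atTop.1 ((hlim.eventually (gt_mem_nhds hδ)).and (eventually_ge_atTop 1))
  exact ⟨k₀, fun k hk => (ha k (hk₀ k hk).2).trans_lt (hk₀ k hk).1⟩

lemma forall_ge_lt_of_powPeak_lt_div {a : ℕ → ℝ} {C δ : ℝ} (hδ : 0 < δ)
    (ha : ∀ k, 1 ≤ k → a k ≤ C * powPeak k) {k₀ : ℕ} (hk₀ : 1 ≤ k₀) (hpeak : powPeak k₀ < δ / C) :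
    ∀ k, k₀ ≤ k → a k < δ := by
  have hC : 0 < C := (div_pos_iff_of_pos_left hδ).1 ((powPeak_nonneg k₀).trans_lt hpeak)
  intro k hk
  calc a k ≤ C * powPeak k := ha k (hk₀.trans hk)
    _ ≤ C * powPeak k₀ := by gcongr; exact powPeak_antitone hk
    _ < δ := by rwa [lt_div_iff₀' hC] at hpeak

-- `‖Q⁻¹ *ᵥ s‖` is the sup norm of `Fin n → ℝ`; the Euclidean norm enters through `WithLp.equiv 2`.
/-- Let `W = Q D Q⁻¹` with `Q` invertible of spectral norm
`‖Q‖₂ ≤ α` and `D` diagonal with entries `d i ∈ [0,1]`; let `β` (resp. `ζ`) be the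
number of indices with `d i = 1` (resp. `d i = 0`). Then for every `s` and `k`,
`‖(I-W)^{k+1} s - (I-W)^k s‖₂ ≤ α √(n-β-ζ) (k^k/(k+1)^{k+1}) ‖Q⁻¹ s‖_∞`.
Consequently the stopping criterion `‖s_{k+1} - s_k‖₂ < δ` is met after finitely
many steps, and (provided `n-β-ζ > 0`) one may take any `k₀` with
`k₀^{k₀}/(k₀+1)^{k₀+1} < δ/(α ‖Q⁻¹ s‖_∞ √(n-β-ζ))`.
(On `Fin n → ℝ` the default norm is the sup norm `‖·‖_∞`; the Euclidean norm is
obtained through `WithLp.equiv 2`.) -/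
theorem stmt_19 (n : ℕ) (W Q : Matrix (Fin n) (Fin n) ℝ) (d : Fin n → ℝ) (α : ℝ)
    (hQ : IsUnit Q.det)
    (hα : ∀ x : EuclideanSpace ℝ (Fin n), ‖(Matrix.toEuclideanLin Q) x‖ ≤ α * ‖x‖)
    (hW : W = Q * Matrix.diagonal d * Q⁻¹)
    (hd : ∀ i, d i ∈ Set.Icc (0 : ℝ) 1) :
    (∀ s : Fin n → ℝ, ∀ k : ℕ, 1 ≤ k →
      ‖(WithLp.equiv 2 (Fin n → ℝ)).symm
          (((1 - W) ^ (k + 1)).mulVec s - ((1 - W) ^ k).mulVec s)‖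
        ≤ α * Real.sqrt ((n - (Finset.univ.filter fun i => d i = 1).card
              - (Finset.univ.filter fun i => d i = 0).card : ℕ) : ℝ)
            * ((k : ℝ) ^ k / ((k : ℝ) + 1) ^ (k + 1)) * ‖Q⁻¹.mulVec s‖) ∧
    (∀ s : Fin n → ℝ, ∀ δ : ℝ, 0 < δ →
      (∃ k₀ : ℕ, ∀ k : ℕ, k₀ ≤ k →
        ‖(WithLp.equiv 2 (Fin n → ℝ)).symm
            (((1 - W) ^ (k + 1)).mulVec s - ((1 - W) ^ k).mulVec s)‖ < δ) ∧
      (0 < n - (Finset.univ.filter fun i => d i = 1).card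
            - (Finset.univ.filter fun i => d i = 0).card →
        ∀ k₀ : ℕ, 1 ≤ k₀ →
          (k₀ : ℝ) ^ k₀ / ((k₀ : ℝ) + 1) ^ (k₀ + 1)
            < δ / (α * ‖Q⁻¹.mulVec s‖
                * Real.sqrt ((n - (Finset.univ.filter fun i => d i = 1).card
                    - (Finset.univ.filter fun i => d i = 0).card : ℕ) : ℝ)) →
          ∀ k : ℕ, k₀ ≤ k →
            ‖(WithLp.equiv 2 (Fin n → ℝ)).symm
                (((1 - W) ^ (k + 1)).mulVec s - ((1 - W) ^ k).mulVec s)‖ < δ)) := by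
  have hcard : #{i | ¬(d i = 1 ∨ d i = 0)} = n - #{i | d i = 1} - #{i | d i = 0} := by
    rw [card_filter_not_or _ _ _ fun i _ h1 h0 => one_ne_zero (h1.symm.trans h0), card_univ,
      Fintype.card_fin]
  have hbound (s : Fin n → ℝ) (k : ℕ) (hk : 1 ≤ k) :=
    norm_one_sub_pow_succ_mulVec_sub_le hQ hα hW hd s hk
  simp only [hcard] at hbound
  refine ⟨hbound, fun s δ hδ => ⟨?_, fun _ k₀ hk₀ hpeak => ?_⟩⟩
  · exact exists_forall_ge_lt_of_le_mul_powPeak hδ fun k hk =>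
      (hbound s k hk).trans_eq (mul_right_comm _ _ _)
  · refine forall_ge_lt_of_powPeak_lt_div hδ (fun k hk => ?_) hk₀ hpeak
    exact (hbound s k hk).trans_eq (by ring)
end
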